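/- For the path P_4 on four vertices, QEC(P_4) = -(2 - √2) = -2/(2 + √2); that is, the maximum of ⟨f, D f⟩ over f ∈ ℝ^4 with ‖f‖ = 1 and sum of coordinates zero, where D_{ij} = |i - j|, equals √2 - 2. -/

import Mathlib

/-- QEC(P_4) = -(2 - √2), where the distance matrix of P_4 is [|i-j|]. -/
theorem qec_path_four :
    IsGreatest {x : ℝ | ∃ f : Fin 4 → ℝ,
      (∑ i, f i ^ 2) = 1 ∧ (∑ i, f i) = 0 ∧
      x = ∑ i, ∑ j, |(i.val : ℝ) - (j.val : ℝ)| * f i * f j} (-(2 - Real.sqrt 2)) := by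
  have hs : Real.sqrt 2 ^ 2 = 2 := Real.sq_sqrt (by norm_num)
  have hs1 : (1:ℝ) < Real.sqrt 2 := by
    nlinarith [Real.sqrt_nonneg 2]
  set s := Real.sqrt 2 with hsdef
  constructor
  · have ht0 : (0:ℝ) < Real.sqrt (8 + 4 * s) := Real.sqrt_pos.mpr (by nlinarith)
    have ht : Real.sqrt (8 + 4 * s) ^ 2 = 8 + 4 * s := Real.sq_sqrt (by nlinarith)
    set t := Real.sqrt (8 + 4 * s) with htdef
    have ht0' : t ≠ 0 := ne_of_gt ht0
    have hu : t * t = 8 + 4 * s := by nlinarith [ht]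
    refine ⟨fun i => ![1/t, -(1+s)/t, (1+s)/t, -1/t] i, ?_, ?_, ?_⟩
    · simp only [Fin.sum_univ_four, Matrix.cons_val]
      norm_num
      field_simp
      linear_combination 2*hs - ht
    · simp only [Fin.sum_univ_four, Matrix.cons_val]
      norm_num
      ring
    · simp only [Fin.sum_univ_four, Fin.val_zero, Fin.val_one, Fin.val_two,
        show ((3:Fin 4).val)=3 from rfl, Matrix.cons_val]
      norm_num
      field_simp
      rw [ht]
      linear_combination 6 * hs
  · rintro x ⟨f, h1, h2, rfl⟩
    simp only [Fin.sum_univ_four, Fin.val_zero, Fin.val_one, Fin.val_two,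
      show ((3:Fin 4).val)=3 from rfl] at *
    norm_num
    have key : f 0 * f 1 + 2 * f 0 * f 2 + 3 * f 0 * f 3 + (f 1 * f 0 + f 1 * f 2 + 2 * f 1 * f 3) +
        (2 * f 2 * f 0 + f 2 * f 1 + f 2 * f 3) +
        (3 * f 3 * f 0 + 2 * f 3 * f 1 + f 3 * f 2)
        = s - 2 - ((s+1)/2 * (f 0 + (s-1)*f 1 - (s-1)*f 2 - f 3)^2
            + (s-1)/4 * (f 0 - f 1 - f 2 + f 3)^2) := by
      linear_combination (s-2)*h1
        - (((s-9)*f 0 + (s-5)*f 1 + (s-5)*f 2 + (s-9)*f 3)/4)*h2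
        - ((1/2 - s/2)*(f 1^2 + f 2^2) - f 0*f 1 + f 0*f 2 + (s-1)*(f 1*f 2)
            + f 1*f 3 - f 2*f 3)*hs
    have hA : 0 ≤ (s+1)/2 * (f 0 + (s-1)*f 1 - (s-1)*f 2 - f 3)^2 := by positivity
    have hB : 0 ≤ (s-1)/4 * (f 0 - f 1 - f 2 + f 3)^2 := by
      apply mul_nonneg (by linarith) (sq_nonneg _)
    linarith [key, hA, hB]
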